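/- arXiv:1711.09324 — 2 statements merged into one kernel-verified Lean document; each statement's English description precedes it below -/
import Mathlib

section
/- Let n be a positive integer and k ≤ n an integer. Define a graph on the set of partitions of n of length at least k, where a partition p containing two parts x and y is joined to the partition p' obtained by replacing x and y with x+y, whenever min{x,y} + k ≤ length(p). Then this graph is connected. -/
/-!
Every partition of `n` is joined to the all-ones partition `1ⁿ`. If `p` has a part `b ≥ 2`,
splitting a `1` off it gives a partition `p₁` one part longer, and merging that `1` back is an
edge `p₁ → p` because `min (b - 1) 1 + k ≤ 1 + length p = length p₁`. The length grows at each
step and is bounded by `n`, so the process ends at `1ⁿ`.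
-/

def IsPartitionOf (n : ℕ) (p : Multiset ℕ) : Prop :=
  (∀ x ∈ p, 0 < x) ∧ p.sum = n

def MergeEdgeGe (n : ℕ) (k : ℤ) (p p' : Multiset ℕ) : Prop :=
  IsPartitionOf n p ∧ IsPartitionOf n p' ∧
    k ≤ (Multiset.card p : ℤ) ∧ k ≤ (Multiset.card p' : ℤ) ∧
    ∃ x y q, p = x ::ₘ y ::ₘ q ∧ p' = (x + y) ::ₘ q ∧
      (min x y : ℤ) + k ≤ (Multiset.card p : ℤ)

def splitOne (p : Multiset ℕ) (b : ℕ) : Multiset ℕ :=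
  (b - 1) ::ₘ 1 ::ₘ p.erase b

theorem card_splitOne {p : Multiset ℕ} {b : ℕ} (hb : b ∈ p) :
    Multiset.card (splitOne p b) = Multiset.card p + 1 := by
  rw [splitOne, Multiset.card_cons, Multiset.card_cons, Multiset.card_erase_add_one hb]

namespace IsPartitionOf

variable {n : ℕ} {p : Multiset ℕ}

theorem card_le (hp : IsPartitionOf n p) : Multiset.card p ≤ n := by
  simpa [← hp.2] using Multiset.card_nsmul_le_sum fun x hx => hp.1 x hx

theorem eq_replicate_one (hp : IsPartitionOf n p) (h : ∀ x ∈ p, x = 1) :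
    p = Multiset.replicate n 1 := by
  have hrep : p = Multiset.replicate (Multiset.card p) 1 := Multiset.eq_replicate_card.mpr h
  have hcard : Multiset.card p = n := by
    rw [← hp.2, hrep, Multiset.sum_replicate, smul_eq_mul, mul_one, Multiset.card_replicate]
  rwa [hcard] at hrep

theorem splitOne {b : ℕ} (hp : IsPartitionOf n p) (hb : b ∈ p) (hb2 : 2 ≤ b) :
    IsPartitionOf n (splitOne p b) := by
  refine ⟨fun x hx => ?_, ?_⟩
  · simp only [_root_.splitOne, Multiset.mem_cons] at hx
    rcases hx with rfl | rfl | hx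
    · omega
    · exact Nat.one_pos
    · exact hp.1 x (Multiset.mem_of_mem_erase hx)
  · rw [← hp.2, ← Multiset.sum_erase hb, _root_.splitOne, Multiset.sum_cons, Multiset.sum_cons]
    omega

end IsPartitionOf

variable {n : ℕ} {k : ℤ}

theorem mergeEdgeGe_splitOne {p : Multiset ℕ} {b : ℕ} (hp : IsPartitionOf n p)
    (hpk : k ≤ Multiset.card p) (hb : b ∈ p) (hb2 : 2 ≤ b) :
    MergeEdgeGe n k (splitOne p b) p := by
  have hcard := card_splitOne hb
  refine ⟨hp.splitOne hb hb2, hp, by omega, hpk, b - 1, 1, p.erase b, rfl, ?_, by omega⟩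
  rw [Nat.sub_add_cancel (by omega), Multiset.cons_erase hb]

theorem reflTransGen_replicate_one {p : Multiset ℕ} (hp : IsPartitionOf n p)
    (hpk : k ≤ Multiset.card p) :
    Relation.ReflTransGen (fun a b => MergeEdgeGe n k a b ∨ MergeEdgeGe n k b a)
      p (Multiset.replicate n 1) := by
  by_cases h : ∀ x ∈ p, x = 1
  · rw [hp.eq_replicate_one h]
  push Not at h
  obtain ⟨b, hb, hb1⟩ := h
  have hb2 : 2 ≤ b := by have := hp.1 b hb; omega
  have hedge := mergeEdgeGe_splitOne hp hpk hb hb2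
  have hle : Multiset.card p + 1 ≤ n := card_splitOne hb ▸ hedge.1.card_le
  exact .head (.inr hedge) (reflTransGen_replicate_one hedge.1 hedge.2.2.1)
termination_by n - Multiset.card p
decreasing_by rw [card_splitOne hb]; omega

theorem partitions_length_ge_connected_general (n : ℕ) (k : ℤ)
    (p p' : Multiset ℕ) (hp : IsPartitionOf n p) (hp' : IsPartitionOf n p')
    (hpk : k ≤ (Multiset.card p : ℤ)) (hp'k : k ≤ (Multiset.card p' : ℤ)) :
    Relation.ReflTransGen (fun a b => MergeEdgeGe n k a b ∨ MergeEdgeGe n k b a) p p' :=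
  (reflTransGen_replicate_one hp hpk).trans <|
    Relation.ReflTransGen.mono (fun _ _ => Or.symm) _ _
      (Relation.reflTransGen_swap.mpr (reflTransGen_replicate_one hp' hp'k))

/-- The graph on partitions of `n` of length at least `k`, with merge edges subject to
`min{x,y} + k ≤ length(p)`, is connected. -/
theorem partitions_length_ge_connected (n : ℕ) (hn : 0 < n) (k : ℤ) (hk : k ≤ (n : ℤ))
    (p p' : Multiset ℕ) (hp : IsPartitionOf n p) (hp' : IsPartitionOf n p')
    (hpk : k ≤ (Multiset.card p : ℤ)) (hp'k : k ≤ (Multiset.card p' : ℤ)) :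
    Relation.ReflTransGen (fun a b => MergeEdgeGe n k a b ∨ MergeEdgeGe n k b a) p p' :=
  partitions_length_ge_connected_general n k p p' hp hp' hpk hp'k
end

section
/- Let Ω^s(d,g,m) be the set of 'small topological profiles' with |V(𝔓)| = |V(𝔉)| = 1: these correspond to partitions p of d-1 with g + 1 - C(d-2,2) ≤ length(p) ≤ g + 1 (where the P-vertex genus is g(v) = g + 1 - length(p), constrained by 0 ≤ g(v) ≤ C(d-2,2)). Join p to p' (obtained by merging parts x, y into x+y) whenever min{x,y} ≤ C(d-2,2) - g + length(p) - 1. Then for all d ≥ 3 and 0 ≤ g ≤ C(d-1,2), this graph is connected. -/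
/-- Membership in the set of small topological profiles with one vertex on each shore:
partitions `p` of `d - 1` with `g + 1 - C(d-2,2) ≤ length(p) ≤ g + 1`
(the lower bound stated additively in `ℕ`). -/
def InSmallLandscape (d g : ℕ) (p : Multiset ℕ) : Prop :=
  IsPartitionOf (d - 1) p ∧ g + 1 ≤ Multiset.card p + (d - 2).choose 2 ∧
    Multiset.card p ≤ g + 1

/-- An edge: `p'` is obtained from `p` by merging parts `x`, `y` into `x + y`, subject to
`min{x,y} ≤ C(d-2,2) - g + length(p) - 1` (stated additively in `ℕ` as
`min{x,y} + g + 1 ≤ C(d-2,2) + length(p)`); both endpoints lie in the landscape. -/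
def SmallEdge (d g : ℕ) (p p' : Multiset ℕ) : Prop :=
  InSmallLandscape d g p ∧ InSmallLandscape d g p' ∧
    ∃ x y q, p = x ::ₘ y ::ₘ q ∧ p' = (x + y) ::ₘ q ∧
      min x y + g + 1 ≤ (d - 2).choose 2 + Multiset.card p

/-!
Splitting a `1` off a part `z ≥ 2` is an allowed edge as long as the length stays at most
`g + 1`, so every profile is joined to one of maximal length `L = min (g + 1) (d - 1)`.
If such a profile has two parts `x, y ≥ 2`, then `L = g + 1`, and merging them is allowed since
`min x y ≤ (d - 1) / 2 ≤ C(d-2,2)`; splitting a `1` off `x + y` returns to length `L` with one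
part `≥ 2` fewer. Hence every profile is joined to a hook partition of length `L`, and there
is only one such partition of `d - 1`.
-/

namespace Multiset

theorem exists_two_le_of_card_lt_sum {p : Multiset ℕ} (h : card p < p.sum) :
    ∃ z ∈ p, 2 ≤ z := by
  by_contra! hle
  have := p.sum_le_card_nsmul 1 fun z hz => Nat.le_of_lt_succ (hle z hz)
  rw [smul_eq_mul, mul_one] at this
  omega

theorem exists_cons_cons_of_one_lt_card_filter {α : Type*} {P : α → Prop} [DecidablePred P]
    {p : Multiset α} (h : 1 < card (p.filter P)) :
    ∃ x y r, P x ∧ P y ∧ p = x ::ₘ y ::ₘ r := by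
  obtain ⟨x, hx⟩ := card_pos_iff_exists_mem.mp (by omega : 0 < card (p.filter P))
  rw [mem_filter] at hx
  obtain ⟨q, rfl⟩ := exists_cons_of_mem hx.1
  rw [filter_cons_of_pos _ hx.2, card_cons] at h
  obtain ⟨y, hy⟩ := card_pos_iff_exists_mem.mp (by omega : 0 < card (q.filter P))
  rw [mem_filter] at hy
  obtain ⟨r, rfl⟩ := exists_cons_of_mem hy.1
  exact ⟨x, y, r, hx.2, hy.2, rfl⟩

end Multiset

open Multiset

/-- Hook shape `(a, 1, …, 1)`. -/
def IsHook (p : Multiset ℕ) : Prop :=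
  card (p.filter (2 ≤ ·)) ≤ 1

theorem IsHook.exists_eq_cons {p : Multiset ℕ} (hp : IsHook p) (hne : p ≠ 0) :
    ∃ z q, p = z ::ₘ q ∧ ∀ b ∈ q, b < 2 := by
  by_cases hbig : ∃ z ∈ p, 2 ≤ z
  · obtain ⟨z, hz, hz2⟩ := hbig
    obtain ⟨q, rfl⟩ := exists_cons_of_mem hz
    unfold IsHook at hp
    rw [filter_cons_of_pos _ hz2, card_cons] at hp
    have hfilter : q.filter (2 ≤ ·) = 0 :=
      card_eq_zero.mp (Nat.le_zero.mp (Nat.le_of_add_le_add_right hp))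
    exact ⟨z, q, rfl, fun b hb => Nat.lt_of_not_le (filter_eq_nil.mp hfilter b hb)⟩
  · obtain ⟨z, hz⟩ := exists_mem_of_ne_zero hne
    obtain ⟨q, rfl⟩ := exists_cons_of_mem hz
    push Not at hbig
    exact ⟨z, q, rfl, fun b hb => hbig b (mem_cons_of_mem hb)⟩

theorem IsHook.eq_of_card_eq_of_sum_eq {p p' : Multiset ℕ} (hp : IsHook p) (hp' : IsHook p')
    (hpos : ∀ x ∈ p, 0 < x) (hpos' : ∀ x ∈ p', 0 < x) (hcard : card p = card p')
    (hsum : p.sum = p'.sum) : p = p' := by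
  rcases eq_or_ne p 0 with rfl | hne
  · exact (card_eq_zero.mp hcard.symm).symm
  obtain ⟨z, q, rfl, hq⟩ := hp.exists_eq_cons hne
  obtain ⟨z', q', rfl, hq'⟩ := hp'.exists_eq_cons (by rintro rfl; simp at hcard)
  have ones : ∀ {r : Multiset ℕ}, (∀ b ∈ r, b < 2) → (∀ b ∈ r, 0 < b) → r = replicate (card r) 1 :=
    fun hr hr' => eq_replicate_card.mpr fun b hb => by have := hr b hb; have := hr' b hb; omega
  rw [ones hq fun b hb => hpos b (mem_cons_of_mem hb)] at hsum ⊢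
  rw [ones hq' fun b hb => hpos' b (mem_cons_of_mem hb)] at hsum ⊢
  simp only [card_cons, add_left_inj] at hcard
  simp only [sum_cons, sum_replicate, smul_eq_mul, mul_one, hcard, add_left_inj] at hsum
  rw [hsum, hcard]

theorem IsPartitionOf.card_le_s12 {n : ℕ} {p : Multiset ℕ} (hp : IsPartitionOf n p) :
    card p ≤ n := by
  simpa [hp.2] using card_nsmul_le_sum hp.1

theorem Nat.le_choose_two_sub_two {m d : ℕ} (hm : 2 ≤ m) (h : 2 * m + 1 ≤ d) :
    m ≤ (d - 2).choose 2 := by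
  obtain ⟨e, rfl⟩ : ∃ e, d = e + 5 := ⟨d - 5, by omega⟩
  rw [show e + 5 - 2 = e + 3 by omega, Nat.choose_two_right, Nat.le_div_iff_mul_le two_pos,
    show e + 3 - 1 = e + 2 by omega]
  nlinarith

theorem smallEdge_split_one {d g z : ℕ} {q : Multiset ℕ} (hp : InSmallLandscape d g (z ::ₘ q))
    (hz : 2 ≤ z) (hcard : card (z ::ₘ q) ≤ g) :
    SmallEdge d g (1 ::ₘ (z - 1) ::ₘ q) (z ::ₘ q) := by
  have ⟨⟨hpos, hsum⟩, hlow, _⟩ := hp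
  simp only [card_cons, sum_cons] at hlow hcard hsum
  refine ⟨⟨⟨fun x hx => ?_, ?_⟩, ?_, ?_⟩, hp, 1, z - 1, q, rfl, ?_, ?_⟩
  · rw [mem_cons, mem_cons] at hx
    rcases hx with rfl | rfl | hx
    · exact one_pos
    · omega
    · exact hpos x (mem_cons_of_mem hx)
  · simp only [sum_cons]; omega
  · simp only [card_cons]; omega
  · simp only [card_cons]; omega
  · rw [Nat.add_sub_cancel' (by omega : 1 ≤ z)]
  · simp only [card_cons]; omega

theorem smallEdge_merge {d g x y : ℕ} {r : Multiset ℕ}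
    (hp : InSmallLandscape d g (x ::ₘ y ::ₘ r)) (hx : 2 ≤ x) (hy : 2 ≤ y)
    (hcard : card (x ::ₘ y ::ₘ r) = g + 1) :
    SmallEdge d g (x ::ₘ y ::ₘ r) ((x + y) ::ₘ r) := by
  have ⟨⟨hpos, hsum⟩, _, _⟩ := hp
  rw [sum_cons, sum_cons] at hsum
  rw [card_cons, card_cons] at hcard
  have hmin : min x y ≤ (d - 2).choose 2 := Nat.le_choose_two_sub_two (le_min hx hy) (by omega)
  refine ⟨hp, ⟨⟨fun b hb => ?_, ?_⟩, ?_, ?_⟩, x, y, r, rfl, rfl, ?_⟩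
  · rcases mem_cons.mp hb with rfl | hb
    · omega
    · exact hpos b (mem_cons_of_mem (mem_cons_of_mem hb))
  · rw [sum_cons]; omega
  · rw [card_cons]; omega
  · rw [card_cons]; omega
  · rw [card_cons, card_cons]; omega

theorem exists_card_eq_reachable {d g : ℕ} {p : Multiset ℕ} (hp : InSmallLandscape d g p) :
    ∃ q, InSmallLandscape d g q ∧ card q = min (g + 1) (d - 1) ∧
      Relation.ReflTransGen (Relation.SymmGen (SmallEdge d g)) p q := by
  induction h : min (g + 1) (d - 1) - card p generalizing p with
  | zero =>
    exact ⟨p, hp, (le_min hp.2.2 hp.1.card_le_s12).antisymm (Nat.sub_eq_zero_iff_le.mp h), .refl⟩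
  | succ k ih =>
    obtain ⟨z, hz, hz2⟩ := exists_two_le_of_card_lt_sum (hp.1.2 ▸ by omega : card p < p.sum)
    obtain ⟨q, rfl⟩ := exists_cons_of_mem hz
    have hsplit := smallEdge_split_one hp hz2 (by omega)
    obtain ⟨r, hr, hrcard, hqr⟩ := ih hsplit.1 (by simp only [card_cons] at h ⊢; omega)
    exact ⟨r, hr, hrcard, .head (.inr hsplit) hqr⟩

theorem exists_isHook_reachable_of_card_eq {d g : ℕ} {p : Multiset ℕ}
    (hp : InSmallLandscape d g p) (hcard : card p = min (g + 1) (d - 1)) :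
    ∃ t, InSmallLandscape d g t ∧ card t = min (g + 1) (d - 1) ∧ IsHook t ∧
      Relation.ReflTransGen (Relation.SymmGen (SmallEdge d g)) p t := by
  induction h : card (p.filter (2 ≤ ·)) using Nat.strong_induction_on generalizing p with
  | _ n ih =>
    by_cases hhook : IsHook p
    · exact ⟨p, hp, hcard, hhook, .refl⟩
    obtain ⟨x, y, r, hx, hy, rfl⟩ := exists_cons_cons_of_one_lt_card_filter (not_le.mp hhook)
    have hr : card r ≤ r.sum := by
      simpa using card_nsmul_le_sum fun b hb => hp.1.1 b (mem_cons_of_mem (mem_cons_of_mem hb))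
    have hsum := hp.1.2
    simp only [sum_cons, card_cons] at hsum hcard
    have hmerge := smallEdge_merge hp hx hy (by rw [card_cons, card_cons]; omega)
    have hsplit := smallEdge_split_one hmerge.2.1 (by omega) (by rw [card_cons]; omega)
    have hfewer : card ((1 ::ₘ (x + y - 1) ::ₘ r).filter (2 ≤ ·)) < n := by
      rw [← h, filter_cons_of_neg _ (by omega), filter_cons_of_pos _ (by omega),
        filter_cons_of_pos _ hx, filter_cons_of_pos _ hy, card_cons, card_cons, card_cons]
      exact Nat.lt_add_one _
    obtain ⟨t, ht, htcard, hthook, hrt⟩ :=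
      ih _ hfewer hsplit.1 (by simp only [card_cons]; omega) rfl
    exact ⟨t, ht, htcard, hthook, .head (.inl hmerge) (.head (.inr hsplit) hrt)⟩

theorem exists_isHook_reachable {d g : ℕ} {p : Multiset ℕ} (hp : InSmallLandscape d g p) :
    ∃ t, InSmallLandscape d g t ∧ card t = min (g + 1) (d - 1) ∧ IsHook t ∧
      Relation.ReflTransGen (Relation.SymmGen (SmallEdge d g)) p t := by
  obtain ⟨q, hq, hqcard, hpq⟩ := exists_card_eq_reachable hp
  obtain ⟨t, ht, htcard, hthook, hqt⟩ := exists_isHook_reachable_of_card_eq hq hqcard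
  exact ⟨t, ht, htcard, hthook, hpq.trans hqt⟩

theorem small_landscape_one_vertex_connected_general (d g : ℕ)
    (p p' : Multiset ℕ) (hp : InSmallLandscape d g p) (hp' : InSmallLandscape d g p') :
    Relation.ReflTransGen (fun a b => SmallEdge d g a b ∨ SmallEdge d g b a) p p' := by
  obtain ⟨t, ht, htcard, hthook, hpt⟩ := exists_isHook_reachable hp
  obtain ⟨t', ht', ht'card, ht'hook, hp't'⟩ := exists_isHook_reachable hp'
  have htt' : t = t' := hthook.eq_of_card_eq_of_sum_eq ht'hook ht.1.1 ht'.1.1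
    (htcard.trans ht'card.symm) (ht.1.2.trans ht'.1.2.symm)
  exact hpt.trans (htt' ▸ symm hp't')

/-- For all `d ≥ 3` and `0 ≤ g ≤ C(d-1,2)`, the graph of small topological profiles with
`|V(𝔓)| = |V(𝔉)| = 1` (partitions of `d-1` with the length bounds above and merge edges
subject to the min condition) is connected. -/
theorem small_landscape_one_vertex_connected (d g : ℕ) (hd : 3 ≤ d)
    (hg : g ≤ (d - 1).choose 2)
    (p p' : Multiset ℕ) (hp : InSmallLandscape d g p) (hp' : InSmallLandscape d g p') :
    Relation.ReflTransGen (fun a b => SmallEdge d g a b ∨ SmallEdge d g b a) p p' :=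
  small_landscape_one_vertex_connected_general d g p p' hp hp'
end
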